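/- arXiv:2106.14098 — 4 statements merged into one kernel-verified Lean document; each statement's English description precedes it below -/
import Mathlib

section
/- For every real number s and every ε > 0 there exists a piecewise C¹ curve γ : [0,1] → 𝓗 with γ(0) = (0,0,0), γ(1) = (0,0,s), and σ-length ℓ_σ(γ) < ε. Consequently the geodesic distance of the left-invariant weak Riemannian metric σ satisfies d((0,0,0),(0,0,s)) = 0 for every s ∈ ℝ. -/
open scoped RealInnerProductSpace
open Real

noncomputable section

abbrev l2 : Type := lp (fun _ : ℕ => ℝ) 2

abbrev Hei : Type := l2 × l2 × ℝ

/-- The group operation of the infinite dimensional Heisenberg group. -/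
def hMul (p q : Hei) : Hei :=
  (p.1 + q.1, p.2.1 + q.2.1, p.2.2 + q.2.2 + ⟪p.1, q.2.1⟫ - ⟪p.2.1, q.1⟫)

/-- The square of the weak norm `‖u‖_η`. -/
def etaSq (u : l2) : ℝ := ∑' k : ℕ, (u k)^2 / ((k : ℝ) + 1)

/-- The square of the weak Riemannian norm `‖v‖_{σ,p}`. -/
def sigmaSq (p v : Hei) : ℝ :=
  etaSq v.1 + etaSq v.2.1 + (v.2.2 - ⟪p.1, v.2.1⟫ + ⟪p.2.1, v.1⟫)^2

def PiecewiseC1 (γ : ℝ → Hei) : Prop :=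
  ContinuousOn γ (Set.Icc 0 1) ∧
  ∃ S : Finset ℝ, ∀ t ∈ Set.Icc (0:ℝ) 1, t ∉ S →
    DifferentiableAt ℝ γ t ∧ ContinuousAt (deriv γ) t

def Horizontal (γ : ℝ → Hei) : Prop :=
  ∀ t ∈ Set.Icc (0:ℝ) 1, DifferentiableAt ℝ γ t →
    deriv (fun s => (γ s).2.2) t
      = ⟪(γ t).1, deriv (fun s => (γ s).2.1) t⟫
        - ⟪(γ t).2.1, deriv (fun s => (γ s).1) t⟫

def lenSigma (γ : ℝ → Hei) : ℝ :=
  ∫ t in (0:ℝ)..1, Real.sqrt (sigmaSq (γ t) (deriv γ t))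

def lenG (γ : ℝ → Hei) : ℝ :=
  ∫ t in (0:ℝ)..1,
    Real.sqrt (etaSq (deriv (fun s => (γ s).1) t) + etaSq (deriv (fun s => (γ s).2.1) t))

def dSigma (p q : Hei) : ℝ :=
  sInf {L | ∃ γ : ℝ → Hei, PiecewiseC1 γ ∧ γ 0 = p ∧ γ 1 = q ∧ lenSigma γ = L}

def rho (p q : Hei) : ℝ :=
  sInf {L | ∃ γ : ℝ → Hei, PiecewiseC1 γ ∧ Horizontal γ ∧ γ 0 = p ∧ γ 1 = q ∧ lenG γ = L}

def sigma0 (v w : Hei) : ℝ :=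
  (∑' k : ℕ, ((v.1 k) * (w.1 k) + (v.2.1 k) * (w.2.1 k)) / ((k : ℝ) + 1)) + v.2.2 * w.2.2

def bracket (X Y : Hei) : Hei := (0, 0, 2 * (⟪X.1, Y.2.1⟫ - ⟪X.2.1, Y.1⟫))

/-- `eVec n` is the `(n+1)`-th standard basis vector of `ℓ²`. -/
def eVec (n : ℕ) : l2 := lp.single 2 n 1

def e3 : Hei := (0, 0, 1)

/-!
Lift a planar curve `(x, y)` to `t ↦ (x t • eVec n, y t • eVec n, z t)` with `z' = x y' - y x'`.
The lift is horizontal, so its `σ`-speed is the planar speed divided by `√(n+1)`, the `η`-weight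
of the `n`-th coordinate. The ellipse `x = cos 2πt - 1`, `y = (s/2π) sin 2πt` closes up after one
turn while `z`, twice the signed area swept out, climbs from `0` to `s`; its lifts along
`eVec n` therefore join the origin to `(0,0,s)` with `σ`-length `L/√(n+1) → 0`.
-/

lemma etaSq_smul_eVec (n : ℕ) (a : ℝ) : etaSq (a • eVec n) = a ^ 2 / ((n : ℝ) + 1) := by
  unfold etaSq
  rw [tsum_eq_single n fun k hk => by simp [eVec, lp.single_apply, hk]]
  simp [eVec]

lemma inner_smul_eVec_smul_eVec (n : ℕ) (a b : ℝ) : ⟪a • eVec n, b • eVec n⟫ = a * b := by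
  simp [eVec, real_inner_smul_left, real_inner_smul_right, mul_comm]

lemma sigmaSq_smul_eVec (n : ℕ) (a b c a' b' c' : ℝ) :
    sigmaSq (a • eVec n, b • eVec n, c) (a' • eVec n, b' • eVec n, c')
      = (a' ^ 2 + b' ^ 2) / ((n : ℝ) + 1) + (c' - a * b' + b * a') ^ 2 := by
  simp only [sigmaSq, etaSq_smul_eVec, inner_smul_eVec_smul_eVec]
  ring

lemma lenSigma_nonneg (γ : ℝ → Hei) : 0 ≤ lenSigma γ :=
  intervalIntegral.integral_nonneg zero_le_one fun _ _ => Real.sqrt_nonneg _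

lemma dSigma_le_lenSigma {γ : ℝ → Hei} (hγ : PiecewiseC1 γ) :
    dSigma (γ 0) (γ 1) ≤ lenSigma γ :=
  csInf_le ⟨0, by rintro _ ⟨γ, -, -, -, rfl⟩; exact lenSigma_nonneg γ⟩ ⟨γ, hγ, rfl, rfl, rfl⟩

lemma PiecewiseC1.of_contDiff {γ : ℝ → Hei} (hγ : ContDiff ℝ 1 γ) : PiecewiseC1 γ :=
  ⟨hγ.continuous.continuousOn, ∅, fun _ _ _ =>
    ⟨hγ.differentiable one_ne_zero _, (hγ.continuous_deriv le_rfl).continuousAt⟩⟩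

def axisCurve (n : ℕ) (x y z : ℝ → ℝ) (t : ℝ) : Hei := (x t • eVec n, y t • eVec n, z t)

section axisCurve

variable (n : ℕ) {x y z : ℝ → ℝ}

lemma contDiff_axisCurve (hx : ContDiff ℝ 1 x) (hy : ContDiff ℝ 1 y) (hz : ContDiff ℝ 1 z) :
    ContDiff ℝ 1 (axisCurve n x y z) :=
  (hx.smul contDiff_const).prodMk ((hy.smul contDiff_const).prodMk hz)

lemma deriv_axisCurve (hx : Differentiable ℝ x) (hy : Differentiable ℝ y)
    (hz : Differentiable ℝ z) (t : ℝ) :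
    deriv (axisCurve n x y z) t = (deriv x t • eVec n, deriv y t • eVec n, deriv z t) :=
  (((hx t).hasDerivAt.smul_const _).prodMk
    (((hy t).hasDerivAt.smul_const _).prodMk (hz t).hasDerivAt)).deriv

lemma lenSigma_axisCurve (hx : Differentiable ℝ x) (hy : Differentiable ℝ y)
    (hz : Differentiable ℝ z) (horizontal : ∀ t, deriv z t = x t * deriv y t - y t * deriv x t) :
    lenSigma (axisCurve n x y z)
      = (∫ t in (0 : ℝ)..1, √(deriv x t ^ 2 + deriv y t ^ 2)) / √((n : ℝ) + 1) := by
  have speed (t : ℝ) : sigmaSq (axisCurve n x y z t) (deriv (axisCurve n x y z) t)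
      = (deriv x t ^ 2 + deriv y t ^ 2) / ((n : ℝ) + 1) := by
    rw [deriv_axisCurve n hx hy hz, axisCurve, sigmaSq_smul_eVec, horizontal]
    ring
  simp only [lenSigma, speed, Real.sqrt_div' _ (by positivity : (0 : ℝ) ≤ n + 1),
    intervalIntegral.integral_div]

end axisCurve

open Filter Topology in
lemma exists_piecewiseC1_lenSigma_lt (s ε : ℝ) (hε : 0 < ε) :
    ∃ γ : ℝ → Hei, PiecewiseC1 γ ∧
      γ 0 = ((0, 0, 0) : Hei) ∧ γ 1 = ((0, 0, s) : Hei) ∧ lenSigma γ < ε := by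
  set b := s / (2 * π)
  set x : ℝ → ℝ := fun t => cos (2 * π * t) - 1
  set y : ℝ → ℝ := fun t => b * sin (2 * π * t)
  set z : ℝ → ℝ := fun t => b * (2 * π * t - sin (2 * π * t))
  have hx : ContDiff ℝ 1 x := by fun_prop
  have hy : ContDiff ℝ 1 y := by fun_prop
  have hz : ContDiff ℝ 1 z := by fun_prop
  have hθ (t : ℝ) : HasDerivAt (fun t => 2 * π * t) (2 * π) t := by
    simpa using (hasDerivAt_id t).const_mul (2 * π)
  have horizontal (t : ℝ) : deriv z t = x t * deriv y t - y t * deriv x t := by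
    have hz' : HasDerivAt z (b * (2 * π - cos (2 * π * t) * (2 * π))) t :=
      ((hθ t).sub (hθ t).sin).const_mul b
    rw [((hθ t).cos.sub_const 1).deriv, ((hθ t).sin.const_mul b).deriv, hz'.deriv]
    linear_combination -(b * 2 * π) * sin_sq_add_cos_sq (2 * π * t)
  have shrinking : Tendsto (fun n : ℕ => (∫ t in (0 : ℝ)..1, √(deriv x t ^ 2 + deriv y t ^ 2))
      / √((n : ℝ) + 1)) atTop (𝓝 0) :=
    tendsto_const_nhds.div_atTop <| tendsto_sqrt_atTop.comp <|
      tendsto_atTop_add_const_right _ 1 tendsto_natCast_atTop_atTop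
  obtain ⟨n, hn⟩ := (shrinking.eventually (gt_mem_nhds hε)).exists
  refine ⟨axisCurve n x y z, .of_contDiff (contDiff_axisCurve n hx hy hz), ?_, ?_, ?_⟩
  · simp [axisCurve, x, y, z]
  · simp [axisCurve, x, y, z, b]
  · rwa [lenSigma_axisCurve n (hx.differentiable one_ne_zero) (hy.differentiable one_ne_zero)
      (hz.differentiable one_ne_zero) horizontal]

/-- For every real `s` and `ε > 0` there is a piecewise `C¹` curve from the origin
to `(0,0,s)` of `σ`-length less than `ε`; consequently `d((0,0,0),(0,0,s)) = 0`. -/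
theorem statement0 :
    (∀ s : ℝ, ∀ ε > 0, ∃ γ : ℝ → Hei, PiecewiseC1 γ ∧
      γ 0 = ((0, 0, 0) : Hei) ∧ γ 1 = ((0, 0, s) : Hei) ∧ lenSigma γ < ε) ∧
    (∀ s : ℝ, dSigma ((0, 0, 0) : Hei) ((0, 0, s) : Hei) = 0) := by
  refine ⟨exists_piecewiseC1_lenSigma_lt, fun s => le_antisymm ?_ (Real.sInf_nonneg ?_)⟩
  · refine le_of_forall_gt_imp_ge_of_dense fun ε hε => ?_
    obtain ⟨γ, hγ, h0, h1, hlen⟩ := exists_piecewiseC1_lenSigma_lt s ε hε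
    exact h0 ▸ h1 ▸ (dSigma_le_lenSigma hγ).trans hlen.le
  · rintro _ ⟨γ, -, -, -, rfl⟩
    exact lenSigma_nonneg γ

end
end

section
/- Fix c > 0 and let e_n denote the n-th standard basis vector of ℓ². The curve γⁿ : [0,1] → 𝓗, γⁿ(t) = ((t²c/2)e_n, −tc e_n, (t³c²/6)), is a smooth horizontal curve from (0,0,0) to ((c/2)e_n, −c e_n, c²/6); moreover ‖γ̇ⁿ₁(t)‖_η² = t²c²/n and ‖γ̇ⁿ₂(t)‖_η² = c²/n for all t, hence its g-length satisfies ℓ_g(γⁿ) ≤ √2 c/√n, which tends to 0 as n → ∞. -/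
open scoped RealInnerProductSpace
open Real

noncomputable section

lemma etaSq_smul (a : ℝ) (m : ℕ) : etaSq (a • eVec m) = a^2 / ((m : ℝ) + 1) := by
  unfold etaSq
  rw [tsum_eq_single m]
  · rw [lp.coeFn_smul, Pi.smul_apply, eVec, lp.single_apply_self]
    simp [smul_eq_mul]
  · intro k hk
    rw [lp.coeFn_smul, Pi.smul_apply, eVec, lp.single_apply_ne 2 m 1 hk]
    simp

lemma inner_smul_eVec (a b : ℝ) (m : ℕ) : ⟪a • eVec m, b • eVec m⟫ = a * b := by
  rw [real_inner_smul_left, real_inner_smul_right, eVec, lp.inner_single_left]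
  simp [lp.single_apply_self, mul_assoc]

lemma hd1 (c t : ℝ) (m : ℕ) :
    HasDerivAt (fun t : ℝ => (t^2 * c / 2) • eVec m) ((t * c) • eVec m) t := by
  have h : HasDerivAt (fun t : ℝ => t^2 * c / 2) (t * c) t := by
    have := ((hasDerivAt_pow 2 t).mul_const c).div_const 2
    exact this.congr_deriv (by norm_num; ring)
  exact h.smul_const _

lemma hd2 (c t : ℝ) (m : ℕ) :
    HasDerivAt (fun t : ℝ => (-(t * c)) • eVec m) ((-c) • eVec m) t := by
  have h : HasDerivAt (fun t : ℝ => -(t * c)) (-c) t := by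
    simpa using ((hasDerivAt_id t).mul_const c).fun_neg
  exact h.smul_const _

lemma hd3 (c t : ℝ) :
    HasDerivAt (fun t : ℝ => t^3 * c^2 / 6) (t^2 * c^2 / 2) t := by
  have := ((hasDerivAt_pow 3 t).mul_const (c^2)).div_const 6
  exact this.congr_deriv (by norm_num; ring)

/-- The curve `γⁿ(t) = ((t²c/2)eₙ, −tc eₙ, t³c²/6)` is smooth, horizontal, joins the
origin to `((c/2)eₙ, −c eₙ, c²/6)`, and its `g`-length is at most `√2 c/√n → 0`. -/
theorem statement12 (c : ℝ) (hc : 0 < c) (n : ℕ) (hn : 1 ≤ n)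
    (γ : ℝ → Hei)
    (hγ : γ = fun t => ((t^2 * c / 2) • eVec (n - 1), (-(t * c)) • eVec (n - 1),
      t^3 * c^2 / 6)) :
    ContDiff ℝ (⊤ : ℕ∞) γ ∧ Horizontal γ ∧
    γ 0 = ((0, 0, 0) : Hei) ∧
    γ 1 = (((c / 2) • eVec (n - 1), (-c) • eVec (n - 1), c^2 / 6) : Hei) ∧
    (∀ t : ℝ, etaSq (deriv (fun s => (γ s).1) t) = t^2 * c^2 / n ∧
      etaSq (deriv (fun s => (γ s).2.1) t) = c^2 / n) ∧
    lenG γ ≤ Real.sqrt 2 * c / Real.sqrt n ∧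
    Filter.Tendsto (fun m : ℕ => Real.sqrt 2 * c / Real.sqrt m) Filter.atTop (nhds 0) := by
  have hden : ((n - 1 : ℕ) : ℝ) + 1 = (n : ℝ) := by
    have h := Nat.sub_add_cancel hn
    exact_mod_cast congrArg (Nat.cast (R := ℝ)) h
  have hn0 : (0 : ℝ) < (n : ℝ) := by exact_mod_cast hn
  have e1 : (fun s => (γ s).1) = fun s : ℝ => (s^2 * c / 2) • eVec (n - 1) := by rw [hγ]
  have e2 : (fun s => (γ s).2.1) = fun s : ℝ => (-(s * c)) • eVec (n - 1) := by rw [hγ]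
  have e3 : (fun s => (γ s).2.2) = fun s : ℝ => s^3 * c^2 / 6 := by rw [hγ]
  have d1 : ∀ t : ℝ, deriv (fun s => (γ s).1) t = (t * c) • eVec (n - 1) := fun t => by
    rw [e1]; exact (hd1 c t _).deriv
  have d2 : ∀ t : ℝ, deriv (fun s => (γ s).2.1) t = (-c) • eVec (n - 1) := fun t => by
    rw [e2]; exact (hd2 c t _).deriv
  have heta : ∀ t : ℝ, etaSq (deriv (fun s => (γ s).1) t) = t^2 * c^2 / n ∧
      etaSq (deriv (fun s => (γ s).2.1) t) = c^2 / n := by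
    intro t
    rw [d1, d2, etaSq_smul, etaSq_smul, hden]
    constructor <;> ring
  have hsqrt_eq : ∀ m : ℕ, Real.sqrt 2 * c / Real.sqrt m = Real.sqrt (2 * c^2 / m) := by
    intro m
    rw [Real.sqrt_div (by positivity), Real.sqrt_mul (by norm_num), Real.sqrt_sq hc.le]
  refine ⟨?_, ?_, ?_, ?_, heta, ?_, ?_⟩
  · subst hγ
    refine ContDiff.prodMk ?_ (ContDiff.prodMk ?_ ?_)
    · exact (((contDiff_id.pow 2).mul contDiff_const).div_const 2).smul contDiff_const
    · exact ((contDiff_id.mul contDiff_const).neg).smul contDiff_const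
    · exact ((contDiff_id.pow 3).mul contDiff_const).div_const 6
  · intro t ht _
    rw [e3, (hd3 c t).deriv, d1, d2, hγ]
    simp only [real_inner_smul_left, real_inner_smul_right]
    have h1 : ⟪eVec (n-1), eVec (n-1)⟫ = (1 : ℝ) := by
      simpa using inner_smul_eVec 1 1 (n-1)
    rw [h1]; ring
  · rw [hγ]; norm_num
  · rw [hγ]; norm_num
  · unfold lenG
    have hint : ∀ t : ℝ, etaSq (deriv (fun s => (γ s).1) t) +
        etaSq (deriv (fun s => (γ s).2.1) t) = t^2 * c^2 / n + c^2 / n := fun t => by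
      rw [(heta t).1, (heta t).2]
    simp_rw [hint]
    have hcont : Continuous fun t : ℝ => Real.sqrt (t^2 * c^2 / n + c^2 / n) := by
      fun_prop
    calc (∫ t in (0:ℝ)..1, Real.sqrt (t^2 * c^2 / n + c^2 / n))
        ≤ ∫ _ in (0:ℝ)..1, Real.sqrt 2 * c / Real.sqrt n := by
          apply intervalIntegral.integral_mono_on (by norm_num)
            (hcont.intervalIntegrable 0 1) (intervalIntegrable_const)
          intro t ht
          rw [hsqrt_eq]
          apply Real.sqrt_le_sqrt
          have ht2 : t^2 ≤ 1 := by nlinarith [ht.1, ht.2]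
          have hle : t^2*c^2 + c^2 ≤ 2*c^2 := by nlinarith [sq_nonneg c]
          rw [← add_div]
          exact (div_le_div_iff_of_pos_right hn0).mpr hle
      _ = Real.sqrt 2 * c / Real.sqrt n := by simp
  · simp_rw [hsqrt_eq]
    have := (tendsto_const_div_atTop_nhds_zero_nat (2 * c^2)).sqrt
    simpa using this

end
end

section
/- Let Y = (Y¹, Y², Y³) ∈ ℓ²×ℓ²×ℝ and assume that the sequences (j·Y¹_j)_{j≥1} and (j·Y²_j)_{j≥1} belong to ℓ². Then the adjoint B_σ(e³,Y) = ad(Y)*(e³) with respect to σ₀ exists and is given by B_σ(e³,Y) = ((−2j·Y²_j)_{j≥1}, (2j·Y¹_j)_{j≥1}, 0), i.e. B_σ(e³,Y) = 2 Σ_{j≥1} j (Y¹_j e²_j − Y²_j e¹_j); that is, this element B satisfies σ₀([Y,Z], e³) = σ₀(Z, B) for all Z ∈ ℓ²×ℓ²×ℝ. -/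
open scoped RealInnerProductSpace
open Real

noncomputable section

namespace lp

variable {ι : Type*}

theorem real_inner_eq_tsum (f g : lp (fun _ : ι => ℝ) 2) : ⟪f, g⟫ = ∑' i, f i * g i := by
  simpa only [Real.inner_apply] using lp.inner_eq_tsum (𝕜 := ℝ) f g

theorem summable_real_mul (f g : lp (fun _ : ι => ℝ) 2) : Summable fun i => f i * g i := by
  simpa only [Real.inner_apply] using lp.summable_inner (𝕜 := ℝ) f g

end lp

theorem sigma0_bracket_e3 (Y Z : Hei) :
    sigma0 (bracket Y Z) e3 = 2 * (⟪Y.1, Z.2.1⟫ - ⟪Y.2.1, Z.1⟫) := by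
  simp [sigma0, bracket, e3]

theorem sigma0_eq_inner_of_weighted (Z B : Hei) (b₁ b₂ : l2)
    (hB₁ : ∀ k : ℕ, B.1 k = ((k : ℝ) + 1) * b₁ k) (hB₂ : ∀ k : ℕ, B.2.1 k = ((k : ℝ) + 1) * b₂ k) :
    sigma0 Z B = ⟪Z.1, b₁⟫ + ⟪Z.2.1, b₂⟫ + Z.2.2 * B.2.2 := by
  have hterm : ∀ k : ℕ, (Z.1 k * B.1 k + Z.2.1 k * B.2.1 k) / ((k : ℝ) + 1)
      = Z.1 k * b₁ k + Z.2.1 k * b₂ k := fun k => by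
    rw [hB₁, hB₂]
    field_simp
  rw [sigma0, tsum_congr hterm, (lp.summable_real_mul _ _).tsum_add (lp.summable_real_mul _ _),
    lp.real_inner_eq_tsum, lp.real_inner_eq_tsum]

/-- If `(j·Y¹_j)` and `(j·Y²_j)` are square-summable then the adjoint `B_σ(e³,Y)`
exists and equals `2 Σ_j j (Y¹_j e²_j − Y²_j e¹_j)`. -/
theorem statement15 (Y : Hei)
    (h1 : Memℓp (fun j : ℕ => ((j : ℝ) + 1) * Y.1 j) 2)
    (h2 : Memℓp (fun j : ℕ => ((j : ℝ) + 1) * Y.2.1 j) 2) :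
    ∃ B : Hei,
      (∀ j : ℕ, B.1 j = -(2 * ((j : ℝ) + 1) * Y.2.1 j)) ∧
      (∀ j : ℕ, B.2.1 j = 2 * ((j : ℝ) + 1) * Y.1 j) ∧
      B.2.2 = 0 ∧
      ∀ Z : Hei, sigma0 (bracket Y Z) e3 = sigma0 Z B := by
  have hB₁ : Memℓp (fun j : ℕ => -(2 * ((j : ℝ) + 1) * Y.2.1 j)) 2 := by
    simpa only [mul_assoc, neg_mul] using h2.const_mul (-2)
  have hB₂ : Memℓp (fun j : ℕ => 2 * ((j : ℝ) + 1) * Y.1 j) 2 := by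
    simpa only [mul_assoc] using h1.const_mul 2
  refine ⟨(⟨_, hB₁⟩, ⟨_, hB₂⟩, 0), fun _ => rfl, fun _ => rfl, rfl, fun Z => ?_⟩
  rw [sigma0_bracket_e3, sigma0_eq_inner_of_weighted Z _ ((-2 : ℝ) • Y.2.1) ((2 : ℝ) • Y.1)
    (fun _ => by rw [lp.coeFn_smul, Pi.smul_apply, smul_eq_mul]; ring)
    (fun _ => by rw [lp.coeFn_smul, Pi.smul_apply, smul_eq_mul]; ring)]
  rw [real_inner_smul_right, real_inner_smul_right, real_inner_comm Y.1, real_inner_comm Y.2.1]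
  ring

end
end

section
/- For every integer k ≥ 1 let W_k = (Σ_{j=1}^k j⁻³)^{−1/2} (Σ_{j=1}^k e_j/j, 0, 0) ∈ ℓ²×ℓ²×ℝ, a unit vector for σ₀ orthogonal to e³. Then: (i) the element B_k = 2(Σ_{j=1}^k j⁻³)^{−1/2} (0, Σ_{j=1}^k e_j, 0) satisfies σ₀([W_k,Z], e³) = σ₀(Z, B_k) for all Z, i.e. B_k = B_σ(e³,W_k); (ii) σ₀([e³,Z], W_k) = 0 for all Z, i.e. B_σ(W_k,e³) = 0; (iii) therefore Arnold's sectional curvature of the plane spanned by W_k and e³ equals K_σ(W_k,e³) = (1/4)σ₀(B_k,B_k) = (Σ_{j=1}^k j⁻³)^{−1} Σ_{j=1}^k j⁻¹, and K_σ(W_k,e³) → +∞ as k → ∞. -/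
open scoped RealInnerProductSpace
open Real

noncomputable section

/-- `Σ_{j=1}^k j⁻³`. -/
def sumCube (k : ℕ) : ℝ := ∑ j ∈ Finset.range k, 1 / ((j : ℝ) + 1)^3

/-- `W_k = (Σ_{j=1}^k j⁻³)^{-1/2} Σ_{j=1}^k e¹_j/j`. -/
def Wk (k : ℕ) : Hei :=
  (Real.sqrt (sumCube k))⁻¹ •
    (((∑ j ∈ Finset.range k, (1 / ((j : ℝ) + 1)) • eVec j), 0, 0) : Hei)

/-- `B_k = 2 (Σ_{j=1}^k j⁻³)^{-1/2} Σ_{j=1}^k e²_j`. -/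
def Bk (k : ℕ) : Hei :=
  (2 * (Real.sqrt (sumCube k))⁻¹) • ((0, ∑ j ∈ Finset.range k, eVec j, 0) : Hei)

/-! Everything reduces to finite sums: `W_k` and `B_k` live on the first `k` coordinates, where
the weight `1/j` of `σ₀` turns the `ℓ²` pairing `⟪W_k, ·⟫` into the `σ₀`-pairing with `B_k`, and
`e³` is central, so `ad(e³) = 0`. The curvature tends to infinity because `Σ j⁻³` stays bounded
while the harmonic sums diverge. -/

lemma eVec_apply (j n : ℕ) : eVec j n = if n = j then 1 else 0 := by
  rcases eq_or_ne n j with rfl | h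
  · simp [eVec]
  · simp [eVec, h]

lemma sum_range_smul_eVec_apply (k : ℕ) (c : ℕ → ℝ) (n : ℕ) :
    (∑ j ∈ Finset.range k, c j • eVec j) n = if n < k then c n else 0 := by
  rw [lp.coeFn_sum, Finset.sum_apply]
  simp [eVec_apply, Finset.mem_range]

lemma tsum_ite_lt (k : ℕ) (f : ℕ → ℝ) :
    ∑' n, (if n < k then f n else 0) = ∑ n ∈ Finset.range k, f n := by
  rw [tsum_eq_sum (s := Finset.range k) fun n hn => by simp_all]
  exact Finset.sum_congr rfl fun n hn => if_pos (Finset.mem_range.mp hn)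

lemma sigma0_e3_right (v : Hei) : sigma0 v e3 = v.2.2 := by
  simp [sigma0, e3]

lemma bracket_e3_left (Z : Hei) : bracket e3 Z = 0 := by
  simp [bracket, e3]

lemma sigma0_zero_left (W : Hei) : sigma0 0 W = 0 := by
  simp [sigma0]

lemma sumCube_pos {k : ℕ} (hk : 1 ≤ k) : 0 < sumCube k :=
  Finset.sum_pos (fun _ _ => by positivity) (Finset.nonempty_range_iff.mpr (by omega))

lemma inv_sqrt_sumCube_sq (k : ℕ) : (√(sumCube k))⁻¹ ^ 2 = (sumCube k)⁻¹ := by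
  rw [inv_pow, Real.sq_sqrt (show 0 ≤ sumCube k from Finset.sum_nonneg fun _ _ => by positivity)]

lemma Wk_fst_apply (k n : ℕ) :
    (Wk k).1 n = if n < k then (√(sumCube k))⁻¹ / ((n : ℝ) + 1) else 0 := by
  simp only [Wk, Prod.smul_fst]
  rw [lp.coeFn_smul, Pi.smul_apply, sum_range_smul_eVec_apply]
  split_ifs <;> simp [div_eq_mul_inv]

lemma Wk_snd (k : ℕ) : (Wk k).2 = 0 := by
  simp [Wk]

lemma Bk_fst (k : ℕ) : (Bk k).1 = 0 := by
  simp [Bk]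

lemma Bk_snd_snd (k : ℕ) : (Bk k).2.2 = 0 := by
  simp [Bk]

lemma Bk_snd_fst_apply (k n : ℕ) :
    (Bk k).2.1 n = if n < k then 2 * (√(sumCube k))⁻¹ else 0 := by
  have h := sum_range_smul_eVec_apply k (fun _ => 1) n
  simp only [one_smul] at h
  simp only [Bk, Prod.smul_snd, Prod.smul_fst]
  rw [lp.coeFn_smul, Pi.smul_apply, h]
  split_ifs <;> simp

lemma sigma0_Wk_self {k : ℕ} (hk : 1 ≤ k) : sigma0 (Wk k) (Wk k) = 1 := by
  have hsummand : ∀ n : ℕ, ((Wk k).1 n * (Wk k).1 n + (Wk k).2.1 n * (Wk k).2.1 n) / ((n : ℝ) + 1)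
      = if n < k then (√(sumCube k))⁻¹ ^ 2 * (1 / ((n : ℝ) + 1) ^ 3) else 0 := by
    intro n
    rw [Wk_fst_apply, Wk_snd]
    split_ifs <;> simp only [Prod.fst_zero, lp.coeFn_zero, Pi.zero_apply] <;> field_simp <;> ring
  rw [sigma0, tsum_congr hsummand, tsum_ite_lt, ← Finset.mul_sum, Wk_snd, inv_sqrt_sumCube_sq,
    Prod.snd_zero, mul_zero, add_zero]
  exact inv_mul_cancel₀ (sumCube_pos hk).ne'

lemma sigma0_Wk_e3 (k : ℕ) : sigma0 (Wk k) e3 = 0 := by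
  rw [sigma0_e3_right, Wk_snd, Prod.snd_zero]

lemma sigma0_bracket_Wk_e3 (k : ℕ) (Z : Hei) :
    sigma0 (bracket (Wk k) Z) e3 = sigma0 Z (Bk k) := by
  have hsummand : ∀ n : ℕ, (Z.1 n * (Bk k).1 n + Z.2.1 n * (Bk k).2.1 n) / ((n : ℝ) + 1)
      = 2 * (Z.2.1 n * (Wk k).1 n) := by
    intro n
    rw [Bk_fst, Bk_snd_fst_apply, Wk_fst_apply]
    split_ifs <;> simp only [lp.coeFn_zero, Pi.zero_apply] <;> ring
  rw [sigma0_e3_right, sigma0, tsum_congr hsummand, tsum_mul_left, Bk_snd_snd]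
  simp [bracket, Wk_snd, lp.inner_eq_tsum]

lemma sigma0_Bk_self (k : ℕ) :
    sigma0 (Bk k) (Bk k) = 4 * ((sumCube k)⁻¹ * ∑ j ∈ Finset.range k, 1 / ((j : ℝ) + 1)) := by
  have hsummand : ∀ n : ℕ, ((Bk k).1 n * (Bk k).1 n + (Bk k).2.1 n * (Bk k).2.1 n) / ((n : ℝ) + 1)
      = if n < k then 4 * (√(sumCube k))⁻¹ ^ 2 * (1 / ((n : ℝ) + 1)) else 0 := by
    intro n
    rw [Bk_fst, Bk_snd_fst_apply]
    split_ifs <;> simp only [lp.coeFn_zero, Pi.zero_apply] <;> ring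
  rw [sigma0, tsum_congr hsummand, tsum_ite_lt, ← Finset.mul_sum, Bk_snd_snd, inv_sqrt_sumCube_sq]
  ring

lemma sumCube_le_tsum (m : ℕ) : sumCube m ≤ ∑' j : ℕ, 1 / ((j : ℝ) + 1) ^ 3 := by
  have hsum : Summable fun j : ℕ => 1 / ((j : ℝ) + 1) ^ 3 := by
    simpa using (summable_nat_add_iff 1).mpr (Real.summable_one_div_nat_pow.mpr (by norm_num : 1 < 3))
  exact hsum.sum_le_tsum _ fun _ _ => by positivity

lemma tendsto_harmonic_div_sumCube :
    Filter.Tendsto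
      (fun m : ℕ => (sumCube m)⁻¹ * ∑ j ∈ Finset.range m, 1 / ((j : ℝ) + 1))
      Filter.atTop Filter.atTop := by
  have hT : 0 < ∑' j : ℕ, 1 / ((j : ℝ) + 1) ^ 3 := (sumCube_pos le_rfl).trans_le (sumCube_le_tsum 1)
  refine Filter.tendsto_atTop_mono' _ ?_
    (Real.tendsto_sum_range_one_div_nat_succ_atTop.const_mul_atTop (inv_pos.mpr hT))
  filter_upwards [Filter.eventually_ge_atTop 1] with m hm
  gcongr
  · exact sumCube_pos hm
  · exact sumCube_le_tsum m

/-- `W_k` is a `σ₀`-unit vector orthogonal to `e³`; `B_σ(e³,W_k) = B_k`,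
`B_σ(W_k,e³) = 0`, and the sectional curvature
`K_σ(W_k,e³) = (1/4)σ₀(B_k,B_k) = (Σ_{j=1}^k j⁻³)⁻¹ Σ_{j=1}^k j⁻¹ → +∞`. -/
theorem statement17 (k : ℕ) (hk : 1 ≤ k) :
    sigma0 (Wk k) (Wk k) = 1 ∧ sigma0 (Wk k) e3 = 0 ∧
    (∀ Z : Hei, sigma0 (bracket (Wk k) Z) e3 = sigma0 Z (Bk k)) ∧
    (∀ Z : Hei, sigma0 (bracket e3 Z) (Wk k) = 0) ∧
    (1/4) * sigma0 (Bk k) (Bk k)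
      = (sumCube k)⁻¹ * ∑ j ∈ Finset.range k, 1 / ((j : ℝ) + 1) ∧
    Filter.Tendsto
      (fun m : ℕ => (sumCube m)⁻¹ * ∑ j ∈ Finset.range m, 1 / ((j : ℝ) + 1))
      Filter.atTop Filter.atTop := by
  refine ⟨sigma0_Wk_self hk, sigma0_Wk_e3 k, sigma0_bracket_Wk_e3 k, fun Z => ?_, ?_,
    tendsto_harmonic_div_sumCube⟩
  · rw [bracket_e3_left, sigma0_zero_left]
  · rw [sigma0_Bk_self]
    ring

end
end
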